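/- arXiv:2002.01345 — 3 statements merged into one kernel-verified Lean document; each statement's English description precedes it below -/
import Mathlib

section
/- For σ > 1 and real t, |ζ(σ+it)|² = (ζ(4σ)/ζ(2σ)) · ∏ over primes p of (1 - cos(t log p)/cosh(σ log p))^(-1). -/
open Real Complex

open ArithmeticFunction ArithmeticFunction.Moebius in
lemma hasProd_one_sub_cpow {w : ℂ} (hw : 1 < w.re) :
    HasProd (fun p : Nat.Primes ↦ (1 - (p : ℂ) ^ (-w))) (riemannZeta w)⁻¹ := by
  have hw0 : w ≠ 0 := ne_zero_of_one_lt_re hw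
  set f : ArithmeticFunction ℂ :=
    ⟨fun n ↦ (μ n : ℂ) * riemannZetaSummandHom hw0 n, by simp⟩ with hfdef
  have hf : ∀ n, f n = (μ n : ℂ) * riemannZetaSummandHom hw0 n := fun n ↦ rfl
  have hmul : f.IsMultiplicative := by
    constructor
    · simp [hf, riemannZetaSummandHom]
    · intro m n hmn
      rw [hf, hf, hf, isMultiplicative_moebius.map_mul_of_coprime hmn, map_mul]
      push_cast
      ring
  have hsum : Summable (fun n ↦ ‖f n‖) := by
    refine (summable_riemannZetaSummand hw).of_nonneg_of_le (fun _ ↦ norm_nonneg _) fun n ↦ ?_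
    rw [hf, norm_mul]
    refine mul_le_of_le_one_left (norm_nonneg _) ?_
    rw [Complex.norm_intCast]
    exact_mod_cast abs_moebius_le_one
  have hval : ∑' n, f n = (riemannZeta w)⁻¹ := by
    have h0 : ∑' n, f n = LSeries (fun n ↦ ((μ n : ℤ) : ℂ)) w := by
      unfold LSeries
      congr 1; funext n
      rcases eq_or_ne n 0 with rfl | hn
      · simp [hf]
      · rw [hf, LSeries.term_of_ne_zero hn]
        simp [riemannZetaSummandHom, cpow_neg, div_eq_mul_inv]
    rw [h0]
    have h1 := LSeries_zeta_mul_Lseries_moebius hw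
    rw [LSeries_zeta_eq_riemannZeta hw] at h1
    exact eq_inv_of_mul_eq_one_left (by rw [mul_comm] at h1; exact h1)
  have hP := hmul.eulerProduct_hasProd hsum
  rw [hval] at hP
  have hfac : ∀ p : Nat.Primes, ∑' e, f ((p : ℕ) ^ e) = 1 - (p : ℂ) ^ (-w) := by
    intro p
    have hpp := p.prop
    rw [tsum_eq_sum (s := {0, 1}) ?_]
    · rw [Finset.sum_insert (by simp), Finset.sum_singleton]
      rw [hf, hf]
      simp only [pow_zero, pow_one]
      rw [moebius_apply_prime hpp]
      simp [riemannZetaSummandHom]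
      ring
    · intro e he
      simp only [Finset.mem_insert, Finset.mem_singleton] at he
      push_neg at he
      rw [hf, moebius_apply_prime_pow hpp he.1, if_neg he.2]
      simp
  simpa only [hfac] using hP

lemma key_prime (σ t : ℝ) (hσ : 1 < σ) (p : Nat.Primes) :
    (1 - ((p : ℕ) : ℂ) ^ (-((σ : ℂ) + (t : ℂ) * I)))⁻¹
      * (1 - ((p : ℕ) : ℂ) ^ (-((σ : ℂ) - (t : ℂ) * I)))⁻¹
      * ((1 - ((p : ℕ) : ℂ) ^ (-(2 * (σ : ℂ))))⁻¹ * (1 - ((p : ℕ) : ℂ) ^ (-(4 * (σ : ℂ)))))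
    = (((1 - Real.cos (t * Real.log (p : ℕ)) / Real.cosh (σ * Real.log (p : ℕ)))⁻¹ : ℝ) : ℂ) := by
  have hp1 : (1 : ℝ) < ((p : ℕ) : ℝ) := by exact_mod_cast p.prop.one_lt
  set L := Real.log ((p : ℕ) : ℝ) with hLdef
  have hL0 : 0 < L := Real.log_pos hp1
  set a := Real.exp (-(σ * L)) with hadef
  have ha0 : 0 < a := Real.exp_pos _
  have ha1 : a < 1 := by
    rw [hadef, show (1:ℝ) = Real.exp 0 by simp]
    exact Real.exp_lt_exp.mpr (by nlinarith)
  set c := Real.cos (t * L) with hcdef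
  set d := Real.sin (t * L) with hddef
  have hc1 : c ≤ 1 := hcdef ▸ Real.cos_le_one _
  have hp0 : ((p : ℕ) : ℂ) ≠ 0 := by
    have : (0 : ℝ) < ((p : ℕ) : ℝ) := by linarith
    exact_mod_cast this.ne'
  have hcpow : ∀ w : ℂ, ((p : ℕ) : ℂ) ^ (-w) = Complex.exp (-(w * (L : ℂ))) := by
    intro w
    rw [Complex.cpow_def_of_ne_zero hp0]
    congr 1
    rw [show ((p : ℕ) : ℂ) = (((p : ℕ) : ℝ) : ℂ) by push_cast; rfl,
      ← Complex.ofReal_log (by linarith : (0:ℝ) ≤ ((p:ℕ):ℝ))]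
    rw [← hLdef]
    ring
  have h1 : ((p : ℕ) : ℂ) ^ (-((σ : ℂ) + (t : ℂ) * I)) = (a : ℂ) * ((c : ℂ) - (d : ℂ) * I) := by
    rw [hcpow, show -(((σ : ℂ) + (t : ℂ) * I) * (L : ℂ))
        = ((-(σ * L) : ℝ) : ℂ) + ((-(t * L) : ℝ) : ℂ) * I by push_cast; ring,
      Complex.exp_add, Complex.exp_mul_I, ← Complex.ofReal_exp, ← Complex.ofReal_cos,
      ← Complex.ofReal_sin, ← hadef]
    rw [Real.cos_neg, Real.sin_neg, ← hcdef, ← hddef]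
    push_cast
    ring
  have h2 : ((p : ℕ) : ℂ) ^ (-((σ : ℂ) - (t : ℂ) * I)) = (a : ℂ) * ((c : ℂ) + (d : ℂ) * I) := by
    rw [hcpow, show -(((σ : ℂ) - (t : ℂ) * I) * (L : ℂ))
        = ((-(σ * L) : ℝ) : ℂ) + (((t * L) : ℝ) : ℂ) * I by push_cast; ring,
      Complex.exp_add, Complex.exp_mul_I, ← Complex.ofReal_exp, ← Complex.ofReal_cos,
      ← Complex.ofReal_sin, ← hadef, ← hcdef, ← hddef]
  have ha2 : a ^ 2 = Real.exp (-(σ*L) + -(σ*L)) := by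
    rw [hadef, Real.exp_add]; ring
  have ha4 : a ^ 4 = Real.exp (-(σ*L) + -(σ*L) + (-(σ*L) + -(σ*L))) := by
    rw [hadef, Real.exp_add, Real.exp_add]; ring
  have h3 : ((p : ℕ) : ℂ) ^ (-(2 * (σ : ℂ))) = ((a ^ 2 : ℝ) : ℂ) := by
    rw [hcpow, show -((2 * (σ : ℂ)) * (L : ℂ)) = ((-(σ*L) + -(σ*L) : ℝ) : ℂ) by push_cast; ring,
      ← Complex.ofReal_exp, ← ha2]
  have h4 : ((p : ℕ) : ℂ) ^ (-(4 * (σ : ℂ))) = ((a ^ 4 : ℝ) : ℂ) := by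
    rw [hcpow, show -((4 * (σ : ℂ)) * (L : ℂ))
        = ((-(σ*L) + -(σ*L) + (-(σ*L) + -(σ*L)) : ℝ) : ℂ) by push_cast; ring,
      ← Complex.ofReal_exp, ← ha4]
  have hcd : (c : ℂ) ^ 2 + (d : ℂ) ^ 2 = 1 := by
    have h := Real.cos_sq_add_sin_sq (t * L)
    rw [← hcdef, ← hddef] at h
    exact_mod_cast congrArg (fun x : ℝ => (x : ℂ)) h
  have hprod : (1 - (a : ℂ) * ((c : ℂ) - (d : ℂ) * I)) * (1 - (a : ℂ) * ((c : ℂ) + (d : ℂ) * I))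
      = ((1 - 2 * a * c + a ^ 2 : ℝ) : ℂ) := by
    push_cast
    linear_combination (a : ℂ) ^ 2 * hcd - (a : ℂ) ^ 2 * (d : ℂ) ^ 2 * Complex.I_sq
  have hden : 0 < 1 - 2 * a * c + a ^ 2 := by nlinarith [sq_nonneg (1 - a)]
  have hne12 : (1 - (a : ℂ) * ((c : ℂ) - (d : ℂ) * I)) * (1 - (a : ℂ) * ((c : ℂ) + (d : ℂ) * I)) ≠ 0 := by
    rw [hprod]
    exact_mod_cast hden.ne'
  have hcosh : Real.cosh (σ * L) = (1 + a ^ 2) / (2 * a) := by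
    have hexp : Real.exp (σ * L) = a⁻¹ := by
      rw [hadef, ← Real.exp_neg, neg_neg]
    rw [Real.cosh_eq, hexp, ← hadef]
    field_simp
  have ha2pos : (0:ℝ) < 1 - a ^ 2 := by nlinarith
  have hR : (1 - c / Real.cosh (σ * L))⁻¹ = (1 + a ^ 2) / (1 - 2 * a * c + a ^ 2) := by
    have h1a : (0:ℝ) < 1 + a ^ 2 := by positivity
    have hstep : 1 - c / ((1 + a ^ 2) / (2 * a)) = (1 - 2 * a * c + a ^ 2) / (1 + a ^ 2) := by
      field_simp
      ring
    rw [hcosh, hstep, inv_div]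
  rw [h1, h2, h3, h4, hR, ← mul_inv, hprod]
  have e2 : (1 : ℂ) - ((a ^ 2 : ℝ) : ℂ) = ((1 - a ^ 2 : ℝ) : ℂ) := by push_cast; ring
  have e4 : (1 : ℂ) - ((a ^ 4 : ℝ) : ℂ) = ((1 - a ^ 4 : ℝ) : ℂ) := by push_cast; ring
  rw [e2, e4, ← Complex.ofReal_inv, ← Complex.ofReal_inv, ← Complex.ofReal_mul,
    ← Complex.ofReal_mul, Complex.ofReal_inj]
  field_simp
  ring

lemma conj_cpow_nat (w : ℂ) (p : Nat.Primes) :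
    (starRingEnd ℂ) (((p : ℕ) : ℂ) ^ w) = ((p : ℕ) : ℂ) ^ ((starRingEnd ℂ) w) := by
  have harg : (((p : ℕ) : ℂ)).arg ≠ Real.pi := by
    rw [Complex.natCast_arg]
    exact Ne.symm Real.pi_ne_zero
  have h := Complex.conj_cpow (((p : ℕ) : ℂ)) ((starRingEnd ℂ) w) harg
  rw [map_natCast, Complex.conj_conj] at h
  exact h.symm

theorem zeta_abs_sq_euler_product (σ t : ℝ) (hσ : 1 < σ) :
    ((‖riemannZeta (↑σ + ↑t * Complex.I)‖) ^ 2 : ℂ)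
      = (riemannZeta (4 * σ) / riemannZeta (2 * σ))
        * ((∏' p : Nat.Primes,
            (1 - Real.cos (t * Real.log p) / Real.cosh (σ * Real.log p))⁻¹ : ℝ) : ℂ) := by
  have hs : 1 < ((σ : ℂ) + (t : ℂ) * I).re := by simpa using hσ
  have h2re : 1 < (2 * (σ : ℂ)).re := by simp; linarith
  have h4re : 1 < (4 * (σ : ℂ)).re := by simp; linarith
  set s : ℂ := (σ : ℂ) + (t : ℂ) * I with hsdef
  have hP1 := riemannZeta_eulerProduct_hasProd hs
  have hfun : ∀ p : Nat.Primes,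
      (starRingEnd ℂ) ((1 - ((p : ℕ) : ℂ) ^ (-s))⁻¹)
        = (1 - ((p : ℕ) : ℂ) ^ (-((σ : ℂ) - (t : ℂ) * I)))⁻¹ := by
    intro p
    rw [map_inv₀, map_sub, map_one, conj_cpow_nat]
    congr 2
    rw [hsdef]
    simp only [map_neg, map_add, map_mul, Complex.conj_ofReal, Complex.conj_I]
    ring
  have hP2 : HasProd (fun p : Nat.Primes ↦ (1 - ((p : ℕ) : ℂ) ^ (-((σ : ℂ) - (t : ℂ) * I)))⁻¹)
      ((starRingEnd ℂ) (riemannZeta s)) := by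
    have h := hP1.map (starRingEnd ℂ) Complex.continuous_conj
    simp only [Function.comp_def] at h
    exact (funext hfun) ▸ h
  have hP2σ := riemannZeta_eulerProduct_hasProd h2re
  have hP4inv := hasProd_one_sub_cpow h4re
  have H := (hP1.mul hP2).mul (hP2σ.mul hP4inv)
  have hfe : (fun p : Nat.Primes ↦ (1 - ((p : ℕ) : ℂ) ^ (-s))⁻¹
        * (1 - ((p : ℕ) : ℂ) ^ (-((σ : ℂ) - (t : ℂ) * I)))⁻¹
        * ((1 - ((p : ℕ) : ℂ) ^ (-(2 * (σ : ℂ))))⁻¹ * (1 - ((p : ℕ) : ℂ) ^ (-(4 * (σ : ℂ))))))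
      = fun p : Nat.Primes ↦
        (((1 - Real.cos (t * Real.log (p : ℕ)) / Real.cosh (σ * Real.log (p : ℕ)))⁻¹ : ℝ) : ℂ) := by
    funext p
    rw [hsdef]
    exact key_prime σ t hσ p
  rw [hfe] at H
  -- zeta values at real points are real
  have hreal : ∀ w : ℂ, 1 < w.re → (starRingEnd ℂ) w = w → ∃ r : ℝ, riemannZeta w = (r : ℂ) := by
    intro w hw hcw
    have h := (riemannZeta_eulerProduct_hasProd hw).map (starRingEnd ℂ) Complex.continuous_conj
    simp only [Function.comp_def] at h
    have hfw : ∀ p : Nat.Primes,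
        (starRingEnd ℂ) ((1 - ((p : ℕ) : ℂ) ^ (-w))⁻¹) = (1 - ((p : ℕ) : ℂ) ^ (-w))⁻¹ := by
      intro p
      rw [map_inv₀, map_sub, map_one, conj_cpow_nat, map_neg, hcw]
    rw [funext hfw] at h
    have := h.unique (riemannZeta_eulerProduct_hasProd hw)
    exact Complex.conj_eq_iff_real.mp this
  obtain ⟨r2, hr2⟩ := hreal (2 * (σ : ℂ)) h2re (by rw [map_mul, Complex.conj_ofReal, map_ofNat])
  obtain ⟨r4, hr4⟩ := hreal (4 * (σ : ℂ)) h4re (by rw [map_mul, Complex.conj_ofReal, map_ofNat])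
  have hr2ne : r2 ≠ 0 := by
    intro h0
    exact riemannZeta_ne_zero_of_one_lt_re h2re (by rw [hr2, h0, Complex.ofReal_zero])
  have hr4ne : r4 ≠ 0 := by
    intro h0
    exact riemannZeta_ne_zero_of_one_lt_re h4re (by rw [hr4, h0, Complex.ofReal_zero])
  -- identify the value of H as a real number
  have hval : riemannZeta s * (starRingEnd ℂ) (riemannZeta s)
      * (riemannZeta (2 * (σ : ℂ)) * (riemannZeta (4 * (σ : ℂ)))⁻¹)
      = (((‖riemannZeta s‖) ^ 2 * (r2 * r4⁻¹) : ℝ) : ℂ) := by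
    rw [Complex.mul_conj, hr2, hr4, ← Complex.sq_norm]
    push_cast
    ring
  rw [hval] at H
  have hD : HasProd
      (fun p : Nat.Primes ↦ (1 - Real.cos (t * Real.log (p : ℕ)) / Real.cosh (σ * Real.log (p : ℕ)))⁻¹)
      ((‖riemannZeta s‖) ^ 2 * (r2 * r4⁻¹)) := by
    have hind : Topology.IsInducing (Complex.ofRealHom : ℝ →+* ℂ) :=
      Complex.isometry_ofReal.isEmbedding.toIsInducing
    exact (hind.hasProd_iff _ _).mp H
  rw [hD.tprod_eq, hr2, hr4]
  push_cast
  field_simp [Complex.ofReal_ne_zero.mpr hr2ne, Complex.ofReal_ne_zero.mpr hr4ne]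
end

section
/- ∏ over primes p of (1 - 2/(p² + p^(-2)))^(-1) = 105/36. -/
open Finset Real Filter Topology

theorem bern5 : bernoulli' 5 = 0 := by
  rw [bernoulli'_def]; norm_num [sum_range_succ, Nat.choose]
theorem bern6 : bernoulli' 6 = 1 / 42 := by
  rw [bernoulli'_def]; norm_num [sum_range_succ, Nat.choose, bern5]
theorem bern7 : bernoulli' 7 = 0 := by
  rw [bernoulli'_def]; norm_num [sum_range_succ, Nat.choose, bern5, bern6]
theorem bern8 : bernoulli' 8 = -1 / 30 := by
  rw [bernoulli'_def]; norm_num [sum_range_succ, Nat.choose, bern5, bern6, bern7]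

theorem hasSum_zeta_eight' : HasSum (fun n : ℕ => (1 : ℝ) / (n : ℝ) ^ 8) (π ^ 8 / 9450) := by
  have h := hasSum_zeta_nat (k := 4) (by norm_num)
  norm_num at h
  convert h using 1
  · ext n; rw [one_div]
  · rw [bernoulli_eq_bernoulli'_of_ne_one (by norm_num), bern8]
    norm_num [Nat.factorial]
    ring

/-- The completely multiplicative function `n ↦ (n^s)⁻¹` on `ℕ`. -/
noncomputable def powInvHom (s : ℕ) (hs : s ≠ 0) : ℕ →*₀ ℝ where
  toFun n := ((n : ℝ) ^ s)⁻¹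
  map_zero' := by simp [zero_pow hs]
  map_one' := by simp
  map_mul' m n := by push_cast; rw [mul_pow, mul_inv]

theorem hasProd_euler (s : ℕ) (hs : 1 < s) (v : ℝ)
    (hv : HasSum (fun n : ℕ => (1 : ℝ) / (n : ℝ) ^ s) v) :
    HasProd (fun p : Nat.Primes => (1 - ((p : ℝ) ^ s)⁻¹)⁻¹) v := by
  have hs0 : s ≠ 0 := by omega
  have hsum : Summable (fun n => ‖powInvHom s hs0 n‖) := by
    simp only [powInvHom, MonoidWithZeroHom.coe_mk, ZeroHom.coe_mk, Real.norm_eq_abs]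
    apply Summable.abs
    exact (Real.summable_nat_pow_inv).mpr hs
  have h := EulerProduct.eulerProduct_completely_multiplicative_hasProd (F := ℝ) hsum
  have htsum : ∑' n, powInvHom s hs0 n = v := by
    have := hv.tsum_eq
    simp only [powInvHom, MonoidWithZeroHom.coe_mk, ZeroHom.coe_mk, ← one_div]
    exact this
  rw [htsum] at h
  exact h

theorem prod_primes_eq_rat :
    ∏' p : Nat.Primes, (1 - 2 / ((p : ℝ) ^ 2 + ((p : ℝ) ^ 2)⁻¹))⁻¹ = 105 / 36 := by
  have h2 := hasProd_euler 2 (by norm_num) _ hasSum_zeta_two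
  have h4 := hasProd_euler 4 (by norm_num) _ hasSum_zeta_four
  have h8 := hasProd_euler 8 (by norm_num) _ hasSum_zeta_eight'
  have hD := (h2.mul h2).mul h4
  have hpi : (0:ℝ) < π := Real.pi_pos
  have h8ne : (π ^ 8 / 9450 : ℝ) ≠ 0 := by positivity
  -- key pointwise identity
  have key : ∀ p : Nat.Primes, (1 - 2 / ((p : ℝ) ^ 2 + ((p : ℝ) ^ 2)⁻¹))⁻¹ =
      ((1 - ((p : ℝ) ^ 2)⁻¹)⁻¹ * (1 - ((p : ℝ) ^ 2)⁻¹)⁻¹ * (1 - ((p : ℝ) ^ 4)⁻¹)⁻¹) /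
      (1 - ((p : ℝ) ^ 8)⁻¹)⁻¹ := by
    intro p
    have hx : (2:ℝ) ≤ (p : ℝ) := by exact_mod_cast p.prop.two_le
    have hx0 : (0:ℝ) < (p:ℝ) := by linarith
    have h1 : ((p:ℝ)^2) ≠ 1 := by nlinarith
    have h2' : ((p:ℝ)^2 - 1) ≠ 0 := by nlinarith
    have h4' : ((p:ℝ)^4 - 1) ≠ 0 := by nlinarith [pow_le_pow_left₀ (by norm_num : (0:ℝ) ≤ 2) hx 4, sq_nonneg ((p:ℝ)^2)]
    have h8' : ((p:ℝ)^8 - 1) ≠ 0 := by nlinarith [pow_le_pow_left₀ (by norm_num : (0:ℝ) ≤ 2) hx 8, sq_nonneg ((p:ℝ)^4)]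
    have hden : ((p:ℝ)^2 + ((p:ℝ)^2)⁻¹) ≠ 0 := by positivity
    have hne : (p:ℝ) ≠ 0 := ne_of_gt hx0
    have hq := pow_ne_zero 2 h2'
    rw [show ((p:ℝ)^2-1)^2 = 1 - (p:ℝ)^2*2 + (p:ℝ)^4 from by ring] at hq
    conv_rhs => rw [div_eq_mul_inv, inv_inv]
    have e : (1 - (p:ℝ)^2*2 + (p:ℝ)^4)⁻¹ * (1 - (p:ℝ)^2*2 + (p:ℝ)^4) = 1 := inv_mul_cancel₀ hq
    field_simp
    rw [div_eq_iff (by convert hq using 1; ring)]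
    ring
  have hprod : HasProd (fun p : Nat.Primes => (1 - 2 / ((p : ℝ) ^ 2 + ((p : ℝ) ^ 2)⁻¹))⁻¹)
      ((π ^ 2 / 6 * (π ^ 2 / 6) * (π ^ 4 / 90)) / (π ^ 8 / 9450)) := by
    have hT := Filter.Tendsto.div hD h8 h8ne
    refine hT.congr fun s => ?_
    simp only [Pi.div_apply]
    rw [← Finset.prod_div_distrib]
    exact Finset.prod_congr rfl fun p _ => (key p).symm
  have := hprod.tprod_eq
  rw [this]
  have hne : π ≠ 0 := ne_of_gt hpi
  field_simp
  ring
end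

section
/- If ρ = 1/2 + ir is a zero of the Dirichlet beta function with r real, then γ = lim_{k→∞} [4 ∑_{n=0}^{k} ∑_{m=n+1}^{k} (-1)^(m+n+1) cos(r log((2m+1)/(2n+1))) / √((2m+1)(2n+1)) − log(4k)]. -/
open Real Filter

/-- The nontrivial Dirichlet character mod 4, with values in ℂ. -/
noncomputable def chi4C : DirichletCharacter ℂ 4 := ZMod.χ₄.ringHomComp (Int.castRingHom ℂ)

/-- The Dirichlet beta function, as the L-function of the nontrivial character mod 4. -/
noncomputable def dirichletBeta (s : ℂ) : ℂ := DirichletCharacter.LFunction chi4C s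

open Complex in
lemma cpow_sub_cpow_norm_le {s : ℂ} (hs : 0 ≤ s.re) {a b : ℝ} (ha : 1 ≤ a) (hab : a ≤ b) :
    ‖(b : ℂ) ^ (-s) - (a : ℂ) ^ (-s)‖ ≤ ‖s‖ * a ^ (-s.re - 1) * (b - a) := by
  have key : ∀ x ∈ Set.Icc a b, HasDerivWithinAt (fun y : ℝ => (y : ℂ) ^ (-s))
      (-s * (x : ℂ) ^ (-s - 1)) (Set.Icc a b) x := by
    intro x hx
    have hx0 : (0:ℝ) < x := lt_of_lt_of_le one_pos (ha.trans hx.1)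
    have h0 : (0:ℝ) < (x:ℂ).re ∨ (x:ℂ).im ≠ 0 := by left; simpa using hx0
    exact (((Complex.hasStrictDerivAt_cpow_const h0).hasDerivAt).comp_ofReal).hasDerivWithinAt
  have hbound : ∀ x ∈ Set.Icc a b, ‖-s * (x : ℂ) ^ (-s - 1)‖ ≤ ‖s‖ * a ^ (-s.re - 1) := by
    intro x hx
    have hx0 : (0:ℝ) < x := lt_of_lt_of_le one_pos (ha.trans hx.1)
    rw [norm_mul, norm_neg]
    gcongr
    rw [Complex.norm_cpow_eq_rpow_re_of_pos hx0]
    have : (-s - 1).re = -s.re - 1 := by simp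
    rw [this]
    exact Real.rpow_le_rpow_of_nonpos (by linarith) hx.1 (by linarith)
  have := Convex.norm_image_sub_le_of_norm_hasDerivWithin_le key hbound (convex_Icc a b)
    (Set.left_mem_Icc.2 hab) (Set.right_mem_Icc.2 hab)
  calc ‖(b : ℂ) ^ (-s) - (a : ℂ) ^ (-s)‖ ≤ (‖s‖ * a ^ (-s.re - 1)) * ‖b - a‖ := this
    _ = ‖s‖ * a ^ (-s.re - 1) * (b - a) := by
        rw [Real.norm_eq_abs, _root_.abs_of_nonneg (by linarith : (0:ℝ) ≤ b - a)]

noncomputable def bterm (s : ℂ) (n : ℕ) : ℂ := (-1) ^ n * ((2 * n + 1 : ℕ) : ℂ) ^ (-s)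
noncomputable def gterm (s : ℂ) (n : ℕ) : ℂ := bterm s (2 * n) + bterm s (2 * n + 1)
noncomputable def betaSum (s : ℂ) : ℂ := ∑' n, gterm s n

lemma gterm_eq (s : ℂ) (n : ℕ) :
    gterm s n = ((4 * n + 1 : ℕ) : ℂ) ^ (-s) - ((4 * n + 3 : ℕ) : ℂ) ^ (-s) := by
  simp only [gterm, bterm, pow_mul, pow_succ, pow_mul]
  push_cast
  ring_nf

lemma gterm_bound {s : ℂ} (hs : 0 ≤ s.re) (n : ℕ) :
    ‖gterm s n‖ ≤ 2 * ‖s‖ * ((n + 1 : ℝ)) ^ (-s.re - 1) := by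
  have h1 : (1:ℝ) ≤ ((4 * n + 1 : ℕ) : ℝ) := by push_cast; linarith [Nat.cast_nonneg (α := ℝ) n]
  have h2 : ((4 * n + 1 : ℕ) : ℝ) ≤ ((4 * n + 3 : ℕ) : ℝ) := by push_cast; linarith
  have := cpow_sub_cpow_norm_le hs h1 h2
  rw [gterm_eq]
  have heq : ((4 * n + 1 : ℕ) : ℂ) ^ (-s) - ((4 * n + 3 : ℕ) : ℂ) ^ (-s)
      = -((((4 * n + 3 : ℕ) : ℝ) : ℂ) ^ (-s) - (((4 * n + 1 : ℕ) : ℝ) : ℂ) ^ (-s)) := by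
    push_cast; ring
  rw [heq, norm_neg]
  refine this.trans ?_
  have hba : ((4 * n + 3 : ℕ) : ℝ) - ((4 * n + 1 : ℕ) : ℝ) = 2 := by push_cast; ring
  rw [hba]
  have hr : ((4 * n + 1 : ℕ) : ℝ) ^ (-s.re - 1) ≤ ((n + 1 : ℝ)) ^ (-s.re - 1) := by
    apply Real.rpow_le_rpow_of_nonpos (by positivity) (by push_cast; linarith) (by linarith)
  calc ‖s‖ * ((4 * n + 1 : ℕ) : ℝ) ^ (-s.re - 1) * 2
      ≤ ‖s‖ * ((n + 1 : ℝ)) ^ (-s.re - 1) * 2 := by gcongr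
    _ = 2 * ‖s‖ * ((n + 1 : ℝ)) ^ (-s.re - 1) := by ring

lemma summable_aux {δ : ℝ} (hδ : 0 < δ) : Summable (fun n : ℕ => ((n + 1 : ℝ)) ^ (-δ - 1)) := by
  have : Summable (fun n : ℕ => ((n : ℝ)) ^ (-δ - 1)) := by
    rw [Real.summable_nat_rpow]; linarith
  exact (summable_nat_add_iff 1).mpr (by exact_mod_cast this) |>.congr (fun n => by push_cast; ring_nf)

lemma differentiable_bterm (n : ℕ) : Differentiable ℂ (fun s => bterm s n) := by
  apply Differentiable.const_mul
  exact Differentiable.const_cpow differentiable_neg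
    (Or.inl (Nat.cast_ne_zero.mpr (by omega)))

lemma differentiable_gterm (n : ℕ) : Differentiable ℂ (fun s => gterm s n) :=
  (differentiable_bterm _).add (differentiable_bterm _)

lemma summable_gterm {s : ℂ} (hs : 0 < s.re) : Summable (gterm s) := by
  refine Summable.of_norm_bounded ((summable_aux hs).mul_left (2 * ‖s‖)) ?_
  exact fun n => gterm_bound hs.le n

lemma betaSum_diffOn : DifferentiableOn ℂ betaSum {s : ℂ | 0 < s.re} := by
  have hU : IsOpen {s : ℂ | 0 < s.re} := isOpen_lt continuous_const Complex.continuous_re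
  refine TendstoLocallyUniformlyOn.differentiableOn (F := fun (t : Finset ℕ) s => ∑ n ∈ t, gterm s n) (φ := (atTop : Filter (Finset ℕ)))
    ?_ (Eventually.of_forall fun t => ((Differentiable.fun_sum
      (fun n _ => differentiable_gterm n)).differentiableOn)) hU
  rw [tendstoLocallyUniformlyOn_iff_forall_isCompact hU]
  intro K hKU hK
  rcases K.eq_empty_or_nonempty with rfl | hne
  · exact tendstoUniformlyOn_empty
  obtain ⟨z₀, hz₀K, hz₀min⟩ := hK.exists_isMinOn hne (Complex.continuous_re.continuousOn)
  set δ := z₀.re with hδdef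
  have hδ : 0 < δ := hKU hz₀K
  obtain ⟨M, hM⟩ := hK.exists_bound_of_continuousOn continuousOn_id
  have hM0 : 0 ≤ M := le_trans (norm_nonneg z₀) (by simpa using hM z₀ hz₀K)
  apply tendstoUniformlyOn_tsum ((summable_aux hδ).mul_left (2 * M))
  intro n s hsK
  have hs : 0 < s.re := hKU hsK
  refine (gterm_bound hs.le n).trans ?_
  have h1 : (1:ℝ) ≤ (n:ℝ) + 1 := by linarith [Nat.cast_nonneg (α := ℝ) n]
  have hre : δ ≤ s.re := hz₀min hsK
  calc 2 * ‖s‖ * ((n + 1 : ℝ)) ^ (-s.re - 1)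
      ≤ 2 * M * ((n + 1 : ℝ)) ^ (-δ - 1) := by
        apply mul_le_mul
        · have := hM s hsK; simp only [id] at this; linarith
        · exact Real.rpow_le_rpow_of_exponent_le h1 (by linarith)
        · positivity
        · linarith
    _ = 2 * M * ((n + 1 : ℝ)) ^ (-δ - 1) := rfl

lemma chi4C_apply (n : ℕ) : chi4C (n : ZMod 4) = ((ZMod.χ₄ (n : ZMod 4) : ℤ) : ℂ) := rfl

lemma chi4C_ne_one : chi4C ≠ 1 := by
  intro h
  have h3 : IsUnit (((3 : ℕ) : ZMod 4)) := by decide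
  have := DFunLike.congr_fun h (((3 : ℕ) : ZMod 4))
  rw [chi4C_apply, MulChar.one_apply h3, ZMod.χ₄_nat_three_mod_four (by norm_num)] at this
  norm_num at this

lemma summable_bterm {s : ℂ} (hs : 1 < s.re) : Summable (bterm s) := by
  refine Summable.of_norm_bounded (g := fun n => ((n + 1 : ℝ)) ^ (-s.re)) ?_ ?_
  · have : Summable (fun n : ℕ => ((n : ℝ)) ^ (-s.re)) := by
      rw [Real.summable_nat_rpow]; linarith
    exact ((summable_nat_add_iff 1).mpr (by exact_mod_cast this)).congr
      (fun n => by push_cast; ring_nf)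
  · intro n
    rw [bterm, norm_mul]
    have h1 : ‖((-1 : ℂ)) ^ n‖ = 1 := by
      rw [norm_pow, norm_neg, norm_one, one_pow]
    rw [h1, one_mul, Complex.norm_natCast_cpow_of_pos (by omega), Complex.neg_re]
    apply Real.rpow_le_rpow_of_nonpos (by positivity) (by push_cast; linarith) (by linarith)

lemma chi4_odd (n : ℕ) : (ZMod.χ₄ ((2 * n + 1 : ℕ) : ZMod 4) : ℤ) = (-1) ^ n := by
  rw [ZMod.χ₄_eq_neg_one_pow (by omega)]
  congr 1
  omega

lemma LSeries_term_eq (s : ℂ) (n : ℕ) :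
    LSeries.term (fun m : ℕ => chi4C (m : ZMod 4)) s (2 * n + 1) = bterm s n := by
  rw [LSeries.term_def, if_neg (by omega), chi4C_apply, chi4_odd, bterm, Complex.cpow_neg]
  push_cast
  ring

lemma LSeries_eq_tsum_bterm {s : ℂ} (hs : 1 < s.re) :
    LSeries (fun m : ℕ => chi4C (m : ZMod 4)) s = ∑' n, bterm s n := by
  have hinj : Function.Injective (fun n : ℕ => 2 * n + 1) := fun a b h => by
    simp only [] at h; omega
  have hsupp : Function.support (LSeries.term (fun m : ℕ => chi4C (m : ZMod 4)) s)
      ⊆ Set.range (fun n : ℕ => 2 * n + 1) := by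
    intro m hm
    simp only [Function.mem_support] at hm
    rcases Nat.even_or_odd m with he | ho
    · exfalso
      apply hm
      rcases Nat.eq_zero_or_pos m with rfl | hm0
      · simp [LSeries.term_def]
      rw [LSeries.term_def, if_neg (by omega), chi4C_apply, ZMod.χ₄_nat_eq_if_mod_four,
        if_pos (Nat.even_iff.mp he)]
      simp
    · obtain ⟨j, hj⟩ := ho
      exact ⟨j, by simp only []; omega⟩
  calc LSeries (fun m : ℕ => chi4C (m : ZMod 4)) s
      = ∑' n : ℕ, LSeries.term (fun m : ℕ => chi4C (m : ZMod 4)) s ((fun n : ℕ => 2 * n + 1) n) :=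
        (Function.Injective.tsum_eq hinj hsupp).symm
    _ = ∑' n, bterm s n := tsum_congr fun n => LSeries_term_eq s n

lemma tsum_bterm_eq_betaSum {s : ℂ} (hs : 1 < s.re) : ∑' n, bterm s n = betaSum s := by
  have hsum := summable_bterm hs
  have h1 : Summable (fun k : ℕ => bterm s (2 * k)) :=
    (hsum.comp_injective (fun a b h => by omega)).congr (fun n => rfl)
  have h2 : Summable (fun k : ℕ => bterm s (2 * k + 1)) :=
    (hsum.comp_injective (fun a b h => by omega)).congr (fun n => rfl)
  rw [betaSum]
  calc ∑' n, bterm s n = ∑' k, bterm s (2 * k) + ∑' k, bterm s (2 * k + 1) :=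
        (tsum_even_add_odd h1 h2).symm
    _ = ∑' k, gterm s k := (Summable.tsum_add h1 h2).symm

lemma betaSum_eq_dirichletBeta {s : ℂ} (hs : 0 < s.re) : betaSum s = dirichletBeta s := by
  have hU : IsOpen {s : ℂ | 0 < s.re} := isOpen_lt continuous_const Complex.continuous_re
  have hpre : IsPreconnected {s : ℂ | 0 < s.re} :=
    (convex_halfSpace_re_gt 0).isPreconnected
  have hb : AnalyticOnNhd ℂ betaSum {s : ℂ | 0 < s.re} := betaSum_diffOn.analyticOnNhd hU
  have hd : AnalyticOnNhd ℂ dirichletBeta {s : ℂ | 0 < s.re} :=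
    ((DirichletCharacter.differentiable_LFunction chi4C_ne_one).differentiableOn).analyticOnNhd hU
  have h2 : (2 : ℂ) ∈ {s : ℂ | 0 < s.re} := by simp
  have hev : betaSum =ᶠ[nhds (2 : ℂ)] dirichletBeta := by
    have hmem : {s : ℂ | 1 < s.re} ∈ nhds (2 : ℂ) :=
      (isOpen_lt continuous_const Complex.continuous_re).mem_nhds (by simp)
    filter_upwards [hmem] with z hz
    rw [← tsum_bterm_eq_betaSum hz, ← LSeries_eq_tsum_bterm hz]
    exact (DirichletCharacter.LFunction_eq_LSeries chi4C hz).symm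
  exact hb.eqOn_of_preconnected_of_eventuallyEq hd hpre h2 hev hs

lemma bterm_tendsto_zero {s : ℂ} (hs : 0 < s.re) :
    Tendsto (fun n => bterm s n) atTop (nhds 0) := by
  rw [tendsto_zero_iff_norm_tendsto_zero]
  have hnorm : ∀ n : ℕ, ‖bterm s n‖ = ((2 * n + 1 : ℝ)) ^ (-s.re) := by
    intro n
    rw [bterm, norm_mul, norm_pow, norm_neg, norm_one, one_pow, one_mul,
      Complex.norm_natCast_cpow_of_pos (by omega), Complex.neg_re]
    norm_num
  simp only [hnorm]
  have h1 : Tendsto (fun x : ℝ => x ^ (-s.re)) atTop (nhds 0) := tendsto_rpow_neg_atTop hs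
  have h2 : Tendsto (fun n : ℕ => (2 * n + 1 : ℝ)) atTop atTop := by
    apply tendsto_atTop_add_const_right
    exact (tendsto_natCast_atTop_atTop).const_mul_atTop (by norm_num)
  exact h1.comp h2

lemma sum_range_two_mul (s : ℂ) (k : ℕ) :
    ∑ n ∈ Finset.range (2 * k), bterm s n = ∑ j ∈ Finset.range k, gterm s j := by
  induction k with
  | zero => simp
  | succ k ih =>
      rw [Finset.sum_range_succ, ← ih, gterm, show 2 * (k + 1) = 2 * k + 1 + 1 by ring,
        Finset.sum_range_succ, Finset.sum_range_succ]
      ring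

lemma tendsto_partial_bterm {s : ℂ} (hs : 0 < s.re) :
    Tendsto (fun K => ∑ n ∈ Finset.range K, bterm s n) atTop (nhds (betaSum s)) := by
  have hP : Tendsto (fun k => ∑ j ∈ Finset.range k, gterm s j) atTop (nhds (betaSum s)) :=
    (summable_gterm hs).hasSum.tendsto_sum_nat
  have heven : Tendsto (fun k => ∑ n ∈ Finset.range (2 * k), bterm s n) atTop (nhds (betaSum s)) := by
    simpa only [sum_range_two_mul] using hP
  have hodd : Tendsto (fun k => ∑ n ∈ Finset.range (2 * k + 1), bterm s n) atTop
      (nhds (betaSum s)) := by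
    have : ∀ k, ∑ n ∈ Finset.range (2 * k + 1), bterm s n
        = ∑ n ∈ Finset.range (2 * k), bterm s n + bterm s (2 * k) := by
      intro k; rw [Finset.sum_range_succ]
    have h2k : Tendsto (fun k : ℕ => 2 * k) atTop atTop :=
      tendsto_atTop_mono (fun n => by simp only [id_eq]; omega) tendsto_id
    have hz : Tendsto (fun k : ℕ => bterm s (2 * k)) atTop (nhds 0) :=
      (bterm_tendsto_zero hs).comp h2k
    simp only [this]
    simpa using heven.add hz
  rw [Metric.tendsto_atTop] at heven hodd ⊢
  intro ε hε
  obtain ⟨N1, h1⟩ := heven ε hε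
  obtain ⟨N2, h2⟩ := hodd ε hε
  refine ⟨2 * N1 + 2 * N2 + 1, fun K hK => ?_⟩
  rcases Nat.even_or_odd K with ⟨j, hj⟩ | ⟨j, hj⟩
  · have hKj : K = 2 * j := by omega
    rw [hKj]; exact h1 j (by omega)
  · have hKj : K = 2 * j + 1 := by omega
    rw [hKj]; exact h2 j (by omega)

lemma sq_split (g : ℕ → ℕ → ℝ) (hsym : ∀ n m, g n m = g m n) (k : ℕ) :
    ∑ n ∈ Finset.range (k + 1), ∑ m ∈ Finset.range (k + 1), g n m
      = ∑ n ∈ Finset.range (k + 1), g n n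
        + 2 * ∑ n ∈ Finset.range (k + 1), ∑ m ∈ Finset.Ioc n k, g n m := by
  have hsplit : ∀ n ∈ Finset.range (k + 1),
      ∑ m ∈ Finset.range (k + 1), g n m
        = ∑ m ∈ Finset.range (n + 1), g n m + ∑ m ∈ Finset.Ioc n k, g n m := by
    intro n hn
    rw [Finset.mem_range] at hn
    rw [Finset.range_eq_Ico, ← Finset.sum_Ico_consecutive _ (Nat.zero_le (n+1)) hn,
      ← Finset.range_eq_Ico, Finset.Ico_add_one_add_one_eq_Ioc]
  rw [Finset.sum_congr rfl hsplit, Finset.sum_add_distrib]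
  have htri : ∑ n ∈ Finset.range (k + 1), ∑ m ∈ Finset.range (n + 1), g n m
      = ∑ n ∈ Finset.range (k + 1), g n n
        + ∑ n ∈ Finset.range (k + 1), ∑ m ∈ Finset.Ioc n k, g n m := by
    have comm := Finset.sum_Ico_Ico_comm 0 (k + 1) (fun i j => g j i)
    simp only [← Finset.range_eq_Ico] at comm
    have : ∀ j ∈ Finset.range (k+1), ∑ i ∈ Finset.range (j+1), g j i
        = ∑ i ∈ Finset.range (j + 1), (fun i j => g j i) i j := fun j _ => rfl
    rw [Finset.sum_congr rfl this, ← comm]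
    have hstep : ∀ i ∈ Finset.range (k + 1),
        ∑ j ∈ Finset.Ico i (k + 1), g j i = g i i + ∑ m ∈ Finset.Ioc i k, g i m := by
      intro i hi
      rw [Finset.mem_range] at hi
      rw [← Finset.Ico_add_one_add_one_eq_Ioc, ← Finset.sum_Ico_consecutive _ (Nat.le_succ i)
          (Nat.succ_le_succ (Nat.lt_succ_iff.mp hi)), Nat.Ico_succ_singleton,
        Finset.sum_singleton, Finset.Ico_add_one_add_one_eq_Ioc]
      congr 1
      exact Finset.sum_congr (Finset.Ico_add_one_add_one_eq_Ioc i k) fun m _ => hsym m i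
    rw [Finset.sum_congr rfl hstep, Finset.sum_add_distrib]
  rw [htri]
  ring

lemma bterm_explicit (r : ℝ) (n : ℕ) :
    bterm (1 / 2 + r * Complex.I) n
      = (-1) ^ n * ((Real.sqrt (2 * n + 1) : ℝ) : ℂ)⁻¹
          * Complex.exp ((-(r * Real.log (2 * n + 1)) : ℝ) * Complex.I) := by
  have hx : (0:ℝ) < 2 * n + 1 := by positivity
  have hxc : ((2 * n + 1 : ℕ) : ℂ) = ((2 * (n:ℝ) + 1 : ℝ) : ℂ) := by push_cast; ring
  rw [bterm, hxc, Complex.cpow_def_of_ne_zero (by exact_mod_cast ne_of_gt hx),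
    ← Complex.ofReal_log hx.le]
  have h1 : (↑(Real.log (2 * (n:ℝ) + 1)) : ℂ) * (-(1 / 2 + r * Complex.I))
      = (↑(-(Real.log (2 * (n:ℝ) + 1)) / 2) : ℝ) + (↑(-(r * Real.log (2 * (n:ℝ) + 1))) : ℝ) * Complex.I := by
    push_cast; ring
  rw [h1, Complex.exp_add, ← Complex.ofReal_exp]
  have h2 : Real.exp (-Real.log (2 * (n:ℝ) + 1) / 2) = (Real.sqrt (2 * (n:ℝ) + 1))⁻¹ := by
    rw [Real.sqrt_eq_rpow, ← Real.rpow_neg hx.le,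
      Real.rpow_def_of_pos hx]
    ring_nf
  rw [h2, mul_assoc]
  push_cast
  ring

lemma re_bterm_mul_conj (r : ℝ) (m n : ℕ) :
    (bterm (1 / 2 + r * Complex.I) m * (starRingEnd ℂ) (bterm (1 / 2 + r * Complex.I) n)).re
      = (-1 : ℝ) ^ (m + n) * Real.cos (r * Real.log ((2 * (m:ℝ) + 1) / (2 * (n:ℝ) + 1)))
          / Real.sqrt ((2 * (m:ℝ) + 1) * (2 * (n:ℝ) + 1)) := by
  have hu : (0:ℝ) < 2 * (m:ℝ) + 1 := by positivity
  have hv : (0:ℝ) < 2 * (n:ℝ) + 1 := by positivity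
  have hsu : (0:ℝ) < Real.sqrt (2 * (m:ℝ) + 1) := Real.sqrt_pos.mpr hu
  have hsv : (0:ℝ) < Real.sqrt (2 * (n:ℝ) + 1) := Real.sqrt_pos.mpr hv
  rw [bterm_explicit, bterm_explicit, Real.sqrt_mul hu.le, Real.log_div hu.ne' hv.ne']
  simp only [map_mul, map_pow, map_neg, map_one, map_inv₀, Complex.conj_ofReal,
    ← Complex.exp_conj, map_add, Complex.conj_I, map_ofNat]
  simp only [Complex.mul_re, Complex.mul_im, Complex.add_re, Complex.add_im,
    Complex.ofReal_re, Complex.ofReal_im, Complex.I_re, Complex.I_im, Complex.neg_re,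
    Complex.neg_im, Complex.one_re, Complex.one_im, Complex.inv_re, Complex.inv_im,
    Complex.normSq_ofReal, Real.cos_neg, Real.sin_neg, mul_sub,
    Complex.exp_re, Complex.exp_im, Real.exp_zero]
  rw [Real.cos_sub]
  have hpow : ∀ j : ℕ, (((-1 : ℂ)) ^ j).re = (-1:ℝ)^j ∧ (((-1 : ℂ)) ^ j).im = 0 := by
    intro j
    constructor
    · rw [show ((-1:ℂ))^j = (((-1:ℝ)^j : ℝ) : ℂ) by push_cast; ring, Complex.ofReal_re]
    · rw [show ((-1:ℂ))^j = (((-1:ℝ)^j : ℝ) : ℂ) by push_cast; ring, Complex.ofReal_im]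
  rw [(hpow m).1, (hpow m).2, (hpow n).1, (hpow n).2]
  have e1 : (1:ℝ) + (m:ℝ) * 2 = 2 * m + 1 := by ring
  have e2 : (1:ℝ) + (n:ℝ) * 2 = 2 * n + 1 := by ring
  field_simp
  ring_nf
  simp only [Real.exp_zero, one_pow, one_mul, Real.cos_neg, Real.sin_neg]
  ring

lemma Dsum_eq (k : ℕ) : ∑ n ∈ Finset.range (k + 1), (1 : ℝ) / (2 * n + 1)
    = (harmonic (2 * k + 2) : ℝ) - (harmonic (k + 1) : ℝ) / 2 := by
  induction k with
  | zero => norm_num [harmonic_succ, harmonic_zero]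
  | succ k ih =>
      rw [Finset.sum_range_succ, ih, show 2 * (k + 1) + 2 = (2 * k + 2) + 1 + 1 by ring]
      push_cast [harmonic_succ]
      field_simp
      ring

lemma tendsto_Dsum : Tendsto (fun k : ℕ =>
    2 * (∑ n ∈ Finset.range (k + 1), (1 : ℝ) / (2 * n + 1)) - Real.log (4 * k))
    atTop (nhds Real.eulerMascheroniConstant) := by
  have hA : Tendsto (fun k : ℕ => (harmonic (2 * k + 2) : ℝ) - Real.log ((2 * k + 2 : ℕ)))
      atTop (nhds Real.eulerMascheroniConstant) :=
    Real.tendsto_harmonic_sub_log.comp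
      (tendsto_atTop_mono (fun n => by simp only [id_eq]; omega) tendsto_id)
  have hB : Tendsto (fun k : ℕ => (harmonic (k + 1) : ℝ) - Real.log ((k + 1 : ℕ)))
      atTop (nhds Real.eulerMascheroniConstant) :=
    Real.tendsto_harmonic_sub_log.comp
      (tendsto_atTop_mono (fun n => by simp only [id_eq]; omega) tendsto_id)
  have hC : Tendsto (fun k : ℕ => Real.log ((k : ℝ) + 1) - Real.log (k : ℝ)) atTop (nhds 0) := by
    have h1 : Tendsto (fun k : ℕ => (1 : ℝ) + 1 / k) atTop (nhds 1) := by
      simpa using tendsto_const_nhds.add (tendsto_one_div_atTop_nhds_zero_nat (𝕜 := ℝ))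
    have h2 : Tendsto (fun k : ℕ => Real.log (1 + 1 / k)) atTop (nhds 0) := by
      simpa [Function.comp_def] using ((Real.continuousAt_log one_ne_zero).tendsto.comp h1)
    apply h2.congr'
    filter_upwards [eventually_ge_atTop 1] with k hk
    have hk0 : (0:ℝ) < k := by exact_mod_cast hk
    rw [← Real.log_div (by positivity) (by positivity)]
    congr 1
    field_simp
  have := (hA.const_mul 2 |>.sub hB).add hC
  rw [show (2 : ℝ) * Real.eulerMascheroniConstant - Real.eulerMascheroniConstant + 0
      = Real.eulerMascheroniConstant by ring] at this
  apply this.congr'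
  filter_upwards [eventually_ge_atTop 1] with k hk
  have hk0 : (0:ℝ) < k := by exact_mod_cast hk
  rw [Dsum_eq]
  push_cast
  rw [show (4:ℝ) * k = (2*2) * k by norm_num, show 2*(k:ℝ)+2 = 2*(k+1) by ring,
    Real.log_mul (by norm_num) hk0.ne', Real.log_mul (by norm_num) (by positivity),
    Real.log_mul (by norm_num) (by norm_num)]
  ring

theorem gamma_from_beta_zero (r : ℝ)
    (hzero : dirichletBeta (1 / 2 + ↑r * Complex.I) = 0) :
    Tendsto (fun k : ℕ =>
        4 * ∑ n ∈ Finset.range (k + 1), ∑ m ∈ Finset.Ioc n k,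
            (-1 : ℝ) ^ (m + n + 1)
              * Real.cos (r * Real.log ((2 * m + 1) / (2 * n + 1)))
              / Real.sqrt ((2 * m + 1) * (2 * n + 1))
          - Real.log (4 * k))
      atTop (nhds Real.eulerMascheroniConstant) := by
  set s₀ : ℂ := 1 / 2 + ↑r * Complex.I with hs₀
  have h0 : 0 < s₀.re := by
    simp [hs₀, Complex.add_re, Complex.mul_re, Complex.I_re, Complex.I_im]
  have hbeta0 : betaSum s₀ = 0 := (betaSum_eq_dirichletBeta h0).trans hzero
  -- partial sums tend to 0
  set S : ℕ → ℂ := fun k => ∑ n ∈ Finset.range (k + 1), bterm s₀ n with hS_def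
  have hS : Tendsto S atTop (nhds 0) := by
    have := (tendsto_partial_bterm h0).comp (tendsto_add_atTop_nat 1)
    rwa [hbeta0] at this
  have hnormsq : Tendsto (fun k => ‖S k‖ ^ 2) atTop (nhds 0) := by
    have := (hS.norm).pow 2
    simpa using this
  -- notation for re products
  set g : ℕ → ℕ → ℝ := fun n m => (bterm s₀ n * (starRingEnd ℂ) (bterm s₀ m)).re with hg_def
  have hsym : ∀ n m, g n m = g m n := by
    intro n m
    rw [hg_def]
    simp only []
    rw [← Complex.conj_re (bterm s₀ n * (starRingEnd ℂ) (bterm s₀ m)), map_mul,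
      Complex.conj_conj, mul_comm]
  have hdiag : ∀ n : ℕ, g n n = 1 / (2 * (n:ℝ) + 1) := by
    intro n
    have hpos : (0:ℝ) < 2 * (n:ℝ) + 1 := by positivity
    rw [hg_def]
    simp only []
    rw [re_bterm_mul_conj r n n, div_self hpos.ne', Real.log_one, mul_zero, Real.cos_zero,
      Real.sqrt_mul_self hpos.le,
      show ((-1:ℝ))^(n+n) = 1 from Even.neg_one_pow ⟨n, rfl⟩, one_mul]
  have hkey : ∀ k : ℕ, ‖S k‖ ^ 2
      = (∑ n ∈ Finset.range (k + 1), (1:ℝ) / (2 * n + 1))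
        + 2 * ∑ n ∈ Finset.range (k + 1), ∑ m ∈ Finset.Ioc n k, g n m := by
    intro k
    have h1 : (‖S k‖ : ℝ) ^ 2 = (S k * (starRingEnd ℂ) (S k)).re := by
      rw [Complex.mul_conj, Complex.ofReal_re, Complex.normSq_eq_norm_sq]
    rw [h1, hS_def]
    simp only []
    rw [map_sum, Finset.sum_mul_sum, Complex.re_sum]
    have : ∀ n ∈ Finset.range (k+1), (∑ m ∈ Finset.range (k+1),
        bterm s₀ n * (starRingEnd ℂ) (bterm s₀ m)).re = ∑ m ∈ Finset.range (k+1), g n m := by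
      intro n _
      rw [Complex.re_sum]
    rw [Finset.sum_congr rfl this, sq_split g hsym k]
    congr 1
    exact Finset.sum_congr rfl fun n _ => hdiag n
  -- the target sum equals -(inner sums)
  have hT : ∀ k : ℕ, (∑ n ∈ Finset.range (k + 1), ∑ m ∈ Finset.Ioc n k,
        (-1 : ℝ) ^ (m + n + 1) * Real.cos (r * Real.log ((2 * m + 1) / (2 * n + 1)))
          / Real.sqrt ((2 * m + 1) * (2 * n + 1)))
      = - ∑ n ∈ Finset.range (k + 1), ∑ m ∈ Finset.Ioc n k, g n m := by
    intro k
    rw [← Finset.sum_neg_distrib]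
    refine Finset.sum_congr rfl fun n _ => ?_
    rw [← Finset.sum_neg_distrib]
    refine Finset.sum_congr rfl fun m _ => ?_
    rw [hg_def]
    simp only []
    rw [re_bterm_mul_conj r n m,
      show ((2*(n:ℝ)+1)/(2*(m:ℝ)+1)) = ((2*(m:ℝ)+1)/(2*(n:ℝ)+1))⁻¹ by rw [inv_div],
      Real.log_inv, mul_neg, Real.cos_neg, mul_comm (2*(n:ℝ)+1), pow_add, pow_add]
    ring
  have hfinal := tendsto_Dsum.sub (hnormsq.const_mul 2)
  rw [show Real.eulerMascheroniConstant - 2 * 0 = Real.eulerMascheroniConstant by ring] at hfinal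
  apply hfinal.congr
  intro k
  rw [hT k]
  linarith [hkey k]
end
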